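/- arXiv:2102.10461 — 6 statements merged into one kernel-verified Lean document; each statement's English description precedes it below -/
import Mathlib

section
/- Let W be a real n×c matrix whose Gram matrix WᵀW is invertible. Then the ReLU injective layer F : ℝᶜ → ℝ²ⁿ defined by F(x) = (ReLU(Wx), ReLU(−Wx)) is an injective map: F(x) = F(x') implies x = x'. -/
open Matrix

/-- If `WᵀW` is invertible, the ReLU injective layer
`F(x) = (ReLU(Wx), ReLU(-Wx))` is injective. -/
theorem relu_layer_injective (n c : ℕ) (W : Matrix (Fin n) (Fin c) ℝ)
    (hW : IsUnit (Wᵀ * W).det)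
    (F : (Fin c → ℝ) → (Fin n → ℝ) × (Fin n → ℝ))
    (hF : ∀ x, F x = (fun i => max (W.mulVec x i) 0, fun i => max (-(W.mulVec x i)) 0)) :
    Function.Injective F := by
  intro x y hxy
  rw [hF x, hF y, Prod.mk.injEq] at hxy
  have hWeq : W.mulVec x = W.mulVec y := by
    funext i
    have h1 := congrFun hxy.1 i
    have h2 := congrFun hxy.2 i
    have : ∀ t : ℝ, t = max t 0 - max (-t) 0 := by
      intro t
      rcases le_total t 0 with h | h
      · rw [max_eq_right h, max_eq_left (by linarith)]; ring
      · rw [max_eq_left h, max_eq_right (by linarith)]; ring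
    rw [this (W.mulVec x i), this (W.mulVec y i), h1, h2]
  have hG : (Wᵀ * W).mulVec x = (Wᵀ * W).mulVec y := by
    rw [← Matrix.mulVec_mulVec, ← Matrix.mulVec_mulVec, hWeq]
  have := (Matrix.mulVec_injective_iff_isUnit.mpr (Matrix.isUnit_iff_isUnit_det _ |>.mpr hW)) hG
  exact this
end

section
/- Let W be a real n×c matrix, and define the ReLU injective layer F : ℝᶜ → ℝ²ⁿ by F(x) = (ReLU(Wx), ReLU(−Wx)), ReLU acting componentwise. If x ∈ ℝᶜ is a point such that (Wx)ᵢ ≠ 0 for every row index i, then F is differentiable at x, and its Jacobian matrix J ∈ ℝ^{2n×c} at x satisfies JᵀJ = WᵀW; in particular, if WᵀW is invertible then log det(JᵀJ) = log det(WᵀW). -/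
open Matrix

/-- At a point `x` with `(Wx)ᵢ ≠ 0` for all rows `i`, the ReLU injective layer
`F(x) = (ReLU(Wx), ReLU(-Wx))` (with codomain indexed by `Fin n ⊕ Fin n`) is differentiable,
and its Jacobian matrix `J` satisfies `JᵀJ = WᵀW`; in particular, if `WᵀW` is invertible then
`log det (JᵀJ) = log det (WᵀW)`. -/
theorem relu_layer_jacobian (n c : ℕ) (W : Matrix (Fin n) (Fin c) ℝ)
    (F : (Fin c → ℝ) → (Fin n ⊕ Fin n → ℝ))
    (hF : ∀ x, F x =
      Sum.elim (fun i => max (W.mulVec x i) 0) (fun i => max (-(W.mulVec x i)) 0))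
    (x : Fin c → ℝ) (hx : ∀ i, W.mulVec x i ≠ 0) :
    DifferentiableAt ℝ F x ∧
      ∀ J : Matrix (Fin n ⊕ Fin n) (Fin c) ℝ,
        J = LinearMap.toMatrix' ((fderiv ℝ F x : (Fin c → ℝ) →L[ℝ] (Fin n ⊕ Fin n → ℝ)) :
              (Fin c → ℝ) →ₗ[ℝ] (Fin n ⊕ Fin n → ℝ)) →
          Jᵀ * J = Wᵀ * W ∧
            (IsUnit (Wᵀ * W).det → Real.log (Jᵀ * J).det = Real.log (Wᵀ * W).det) := by
  classical
  set M : Matrix (Fin n ⊕ Fin n) (Fin c) ℝ :=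
    Sum.elim (fun i => if 0 < W.mulVec x i then W i else 0)
             (fun i => if W.mulVec x i < 0 then -(W i) else 0) with hM
  -- continuity of each coordinate
  have hcont : ∀ i : Fin n, Continuous fun y : Fin c → ℝ => W.mulVec y i := by
    intro i
    have : (fun y : Fin c → ℝ => W.mulVec y i) = fun y => ∑ j, W i j * y j := by
      funext y; simp [Matrix.mulVec, dotProduct]
    rw [this]
    exact continuous_finset_sum _ fun j _ => (continuous_const.mul (continuous_apply j))
  -- eventual equality with the linear map
  have hsign : ∀ i : Fin n, ∀ᶠ y in nhds x,
      F y (Sum.inl i) = M.mulVec y (Sum.inl i) ∧ F y (Sum.inr i) = M.mulVec y (Sum.inr i) := by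
    intro i
    rcases lt_or_gt_of_ne (hx i) with h | h
    · have hev : ∀ᶠ y in nhds x, W.mulVec y i < 0 :=
        (hcont i).continuousAt.eventually (eventually_lt_nhds h)
      filter_upwards [hev] with y hy
      constructor
      · rw [hF y]
        show max (W.mulVec y i) 0 = (if 0 < W.mulVec x i then W i else 0) ⬝ᵥ y
        rw [if_neg (not_lt_of_gt h), zero_dotProduct, max_eq_right hy.le]
      · rw [hF y]
        show max (-(W.mulVec y i)) 0 = (if W.mulVec x i < 0 then -(W i) else 0) ⬝ᵥ y
        rw [if_pos h, neg_dotProduct, max_eq_left (neg_nonneg.2 hy.le)]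
        rfl
    · have hev : ∀ᶠ y in nhds x, 0 < W.mulVec y i :=
        (hcont i).continuousAt.eventually (eventually_gt_nhds h)
      filter_upwards [hev] with y hy
      constructor
      · rw [hF y]
        show max (W.mulVec y i) 0 = (if 0 < W.mulVec x i then W i else 0) ⬝ᵥ y
        rw [if_pos h, max_eq_left hy.le]
        rfl
      · rw [hF y]
        show max (-(W.mulVec y i)) 0 = (if W.mulVec x i < 0 then -(W i) else 0) ⬝ᵥ y
        rw [if_neg (not_lt_of_gt h), zero_dotProduct,
          max_eq_right (neg_nonpos.2 hy.le)]
  have hev : F =ᶠ[nhds x] fun y => M.mulVec y := by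
    filter_upwards [Filter.eventually_all.2 hsign] with y hy
    funext s
    cases s with
    | inl i => exact (hy i).1
    | inr i => exact (hy i).2
  -- the linear map is differentiable
  have hlin : (fun y => M.mulVec y) = ⇑(LinearMap.toContinuousLinearMap M.mulVecLin) := by
    funext y; simp
  have hdiffM : DifferentiableAt ℝ (fun y => M.mulVec y) x := by
    rw [hlin]; exact (LinearMap.toContinuousLinearMap M.mulVecLin).differentiableAt
  have hdF : DifferentiableAt ℝ F x := hdiffM.congr_of_eventuallyEq hev
  have hfderiv : fderiv ℝ F x = LinearMap.toContinuousLinearMap M.mulVecLin := by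
    rw [hev.fderiv_eq, hlin, ContinuousLinearMap.fderiv]
  have hMtM : Mᵀ * M = Wᵀ * W := by
    ext j k
    simp only [Matrix.mul_apply, Matrix.transpose_apply]
    rw [Fintype.sum_sum_type, ← Finset.sum_add_distrib]
    refine Finset.sum_congr rfl fun i _ => ?_
    rcases lt_or_gt_of_ne (hx i) with h | h
    · simp [hM, h, not_lt_of_gt (show (0:ℝ) > W.mulVec x i from h)]
    · simp [hM, h, not_lt_of_gt h]
  refine ⟨hdF, fun J hJ => ?_⟩
  have hJM : J = M := by
    rw [hJ, hfderiv]
    rw [LinearMap.coe_toContinuousLinearMap, ← Matrix.toLin'_apply', LinearMap.toMatrix'_toLin']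
  rw [hJM, hMtM]
  exact ⟨rfl, fun _ => rfl⟩
end

section
/- Let W be a real n×c matrix with WᵀW invertible and W† = (WᵀW)⁻¹Wᵀ, and let F : ℝᶜ → ℝ²ⁿ be the ReLU injective layer F(x) = (ReLU(Wx), ReLU(−Wx)). Let ε : Ω → ℝ²ⁿ be a random vector with independent, square-integrable coordinates of mean 0 and variance σ². For x ∈ ℝᶜ set y' = F(x) + ε and x' = W†(y'₁ − y'₂), where y'₁, y'₂ are the first and last n coordinates of y'. Then the expected inversion error satisfies E[‖x' − x‖²] = 2σ² Tr((WᵀW)⁻¹). -/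
/-!
The ReLU layer loses nothing: since `max t 0 - max (-t) 0 = t`, subtracting the two halves of
`F x` returns `W x`, so `x' - x = W† D ε` for the differencing matrix `D = [I, -I]`.
For white noise `ε` of variance `σ²`, `E‖A ε‖² = σ² Tr(A Aᵀ)`, and here
`A Aᵀ = W† D Dᵀ W†ᵀ = 2 W† W†ᵀ = 2 (WᵀW)⁻¹`.
-/

open Matrix MeasureTheory ProbabilityTheory

section SecondMoment

variable {Ω ι : Type*} [MeasurableSpace Ω] {μ : Measure Ω}

noncomputable def secondMomentMatrix (μ : Measure Ω) (v : Ω → ι → ℝ) : Matrix ι ι ℝ :=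
  Matrix.of fun j k => ∫ ω, v ω j * v ω k ∂μ

lemma secondMomentMatrix_eq_smul_one [DecidableEq ι] {v : Ω → ι → ℝ} {σ : ℝ}
    (hindep : iIndepFun (fun i ω => v ω i) μ) (hL2 : ∀ i, MemLp (fun ω => v ω i) 2 μ)
    (hmean : ∀ i, ∫ ω, v ω i ∂μ = 0) (hvar : ∀ i, ∫ ω, v ω i ^ 2 ∂μ = σ ^ 2) :
    secondMomentMatrix μ v = σ ^ 2 • 1 := by
  ext j k
  by_cases hjk : j = k
  · subst hjk
    simp [secondMomentMatrix, ← pow_two, hvar]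
  · have hprod := (hindep.indepFun hjk).integral_fun_mul_eq_mul_integral
      (hL2 j).aestronglyMeasurable (hL2 k).aestronglyMeasurable
    simp [secondMomentMatrix, hjk, hprod, hmean]

lemma integral_sum_sq_mulVec [Fintype ι] {m : Type*} [Fintype m] (A : Matrix m ι ℝ)
    {v : Ω → ι → ℝ} (hL2 : ∀ i, MemLp (fun ω => v ω i) 2 μ) :
    ∫ ω, ∑ i, (A *ᵥ v ω) i ^ 2 ∂μ = (A * secondMomentMatrix μ v * Aᵀ).trace := by
  have hint : ∀ j k, Integrable (fun ω => v ω j * v ω k) μ :=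
    fun j k => (hL2 j).integrable_mul (hL2 k)
  have hexpand : ∀ ω, ∑ i, (A *ᵥ v ω) i ^ 2 =
      ∑ i, ∑ j, ∑ k, A i j * A i k * (v ω j * v ω k) := fun ω => by
    simp only [mulVec, dotProduct, sq, Finset.sum_mul_sum]
    exact Finset.sum_congr rfl fun i _ => Finset.sum_congr rfl fun j _ =>
      Finset.sum_congr rfl fun k _ => by ring
  simp_rw [hexpand]
  rw [integral_finsetSum _ fun i _ => integrable_finsetSum _ fun j _ =>
    integrable_finsetSum _ fun k _ => (hint j k).const_mul _]
  have hinner : ∀ i, ∫ ω, ∑ j, ∑ k, A i j * A i k * (v ω j * v ω k) ∂μ =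
      ∑ j, ∑ k, A i j * A i k * ∫ ω, v ω j * v ω k ∂μ := fun i => by
    rw [integral_finsetSum _ fun j _ => integrable_finsetSum _ fun k _ => (hint j k).const_mul _]
    refine Finset.sum_congr rfl fun j _ => ?_
    rw [integral_finsetSum _ fun k _ => (hint j k).const_mul _]
    exact Finset.sum_congr rfl fun k _ => integral_const_mul _ _
  simp only [hinner, trace, diag, mul_apply, transpose_apply, secondMomentMatrix, of_apply,
    Finset.sum_mul]
  refine Finset.sum_congr rfl fun i _ => ?_
  rw [Finset.sum_comm]
  exact Finset.sum_congr rfl fun j _ => Finset.sum_congr rfl fun k _ => by ring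

end SecondMoment

section DifferencingMatrix

variable {n R : Type*} [Fintype n] [DecidableEq n] [Ring R]

lemma fromCols_one_neg_one_mulVec (v : n ⊕ n → R) :
    fromCols (1 : Matrix n n R) (-1) *ᵥ v = fun i => v (Sum.inl i) - v (Sum.inr i) := by
  ext i
  simp [sub_eq_add_neg, neg_mulVec]

lemma fromCols_one_neg_one_mulVec_relu [LinearOrder R] [AddLeftMono R] (u : n → R) :
    fromCols (1 : Matrix n n R) (-1) *ᵥ Sum.elim (fun i => max (u i) 0) (fun i => max (-u i) 0)
      = u := by
  rw [fromCols_one_neg_one_mulVec]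
  ext i
  exact max_zero_sub_max_neg_zero_eq_self (u i)

lemma fromCols_one_neg_one_mul_transpose :
    fromCols (1 : Matrix n n R) (-1 : Matrix n n R) *
      (fromCols (1 : Matrix n n R) (-1 : Matrix n n R))ᵀ = (2 : R) • (1 : Matrix n n R) := by
  rw [transpose_fromCols, fromCols_mul_fromRows]
  simp [two_smul]

end DifferencingMatrix

section LeftPseudoInverse

variable {n c R : Type*} [Fintype n] [Fintype c] [DecidableEq c] [CommRing R]

lemma nonsing_inv_transpose_mul_self_mul_transpose_mul_self (W : Matrix n c R)
    (hW : IsUnit (Wᵀ * W).det) : (Wᵀ * W)⁻¹ * Wᵀ * W = 1 := by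
  rw [Matrix.mul_assoc, nonsing_inv_mul _ hW]

lemma nonsing_inv_transpose_mul_self_mul_transpose_mul_transpose (W : Matrix n c R)
    (hW : IsUnit (Wᵀ * W).det) :
    (Wᵀ * W)⁻¹ * Wᵀ * ((Wᵀ * W)⁻¹ * Wᵀ)ᵀ = (Wᵀ * W)⁻¹ := by
  rw [transpose_mul, transpose_nonsing_inv, transpose_mul, transpose_transpose,
    Matrix.mul_assoc, ← Matrix.mul_assoc Wᵀ, mul_nonsing_inv _ hW, Matrix.mul_one]

end LeftPseudoInverse

theorem relu_layer_inversion_error_general {Ω : Type*} [MeasureSpace Ω]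
    (n c : ℕ) (W : Matrix (Fin n) (Fin c) ℝ) (hW : IsUnit (Wᵀ * W).det)
    (Wdag : Matrix (Fin c) (Fin n) ℝ) (hWdag : Wdag = (Wᵀ * W)⁻¹ * Wᵀ)
    (F : (Fin c → ℝ) → (Fin n ⊕ Fin n → ℝ))
    (hF : ∀ x, F x =
      Sum.elim (fun i => max (W.mulVec x i) 0) (fun i => max (-(W.mulVec x i)) 0))
    (ε : Ω → Fin n ⊕ Fin n → ℝ) (σ : ℝ)
    (hindep : iIndepFun (fun i ω => ε ω i) ℙ)
    (hL2 : ∀ i, MemLp (fun ω => ε ω i) 2 ℙ)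
    (hmean : ∀ i, ∫ ω, ε ω i = 0)
    (hvar : ∀ i, ∫ ω, (ε ω i) ^ 2 = σ ^ 2)
    (x : Fin c → ℝ) (y' : Ω → Fin n ⊕ Fin n → ℝ) (hy' : ∀ ω, y' ω = F x + ε ω)
    (x' : Ω → Fin c → ℝ)
    (hx' : ∀ ω, x' ω = Wdag.mulVec (fun i => y' ω (Sum.inl i) - y' ω (Sum.inr i))) :
    ∫ ω, ∑ i, (x' ω i - x i) ^ 2 = 2 * σ ^ 2 * (Wᵀ * W)⁻¹.trace := by
  set D : Matrix (Fin n) (Fin n ⊕ Fin n) ℝ := fromCols 1 (-1)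
  have herr : ∀ ω, x' ω - x = (Wdag * D) *ᵥ ε ω := fun ω => by
    rw [hx', ← fromCols_one_neg_one_mulVec, hy', hF, mulVec_add,
      fromCols_one_neg_one_mulVec_relu, mulVec_add, mulVec_mulVec, hWdag,
      nonsing_inv_transpose_mul_self_mul_transpose_mul_self W hW, one_mulVec, mulVec_mulVec,
      add_sub_cancel_left]
  calc ∫ ω, ∑ i, (x' ω i - x i) ^ 2
      = ∫ ω, ∑ i, ((Wdag * D) *ᵥ ε ω) i ^ 2 := by simp_rw [← herr, Pi.sub_apply]
    _ = ((Wdag * D) * secondMomentMatrix ℙ ε * (Wdag * D)ᵀ).trace :=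
        integral_sum_sq_mulVec _ hL2
    _ = σ ^ 2 * (Wdag * (D * Dᵀ) * Wdagᵀ).trace := by
        rw [secondMomentMatrix_eq_smul_one hindep hL2 hmean hvar]
        simp [transpose_mul, Matrix.mul_assoc]
    _ = 2 * σ ^ 2 * (Wᵀ * W)⁻¹.trace := by
        rw [fromCols_one_neg_one_mul_transpose, Matrix.mul_smul, Matrix.mul_one, Matrix.smul_mul,
          trace_smul, hWdag, nonsing_inv_transpose_mul_self_mul_transpose_mul_transpose W hW,
          smul_eq_mul, mul_left_comm, mul_assoc]

/-- ReLU injective layer inversion error. With `F(x) = (ReLU(Wx), ReLU(-Wx))`,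
`y' = F(x) + ε` (with `ε : Ω → ℝ²ⁿ` having independent, square-integrable, mean-zero
coordinates of variance `σ²`) and `x' = W†(y'₁ - y'₂)`, the expected squared Euclidean error
is `E[‖x' - x‖²] = 2σ² Tr((WᵀW)⁻¹)`. -/
theorem relu_layer_inversion_error {Ω : Type*} [MeasureSpace Ω]
    [IsProbabilityMeasure (ℙ : Measure Ω)]
    (n c : ℕ) (W : Matrix (Fin n) (Fin c) ℝ) (hW : IsUnit (Wᵀ * W).det)
    (Wdag : Matrix (Fin c) (Fin n) ℝ) (hWdag : Wdag = (Wᵀ * W)⁻¹ * Wᵀ)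
    (F : (Fin c → ℝ) → (Fin n ⊕ Fin n → ℝ))
    (hF : ∀ x, F x =
      Sum.elim (fun i => max (W.mulVec x i) 0) (fun i => max (-(W.mulVec x i)) 0))
    (ε : Ω → Fin n ⊕ Fin n → ℝ) (σ : ℝ)
    (hindep : iIndepFun (fun i ω => ε ω i) ℙ)
    (hL2 : ∀ i, MemLp (fun ω => ε ω i) 2 ℙ)
    (hmean : ∀ i, ∫ ω, ε ω i = 0)
    (hvar : ∀ i, ∫ ω, (ε ω i) ^ 2 = σ ^ 2)
    (x : Fin c → ℝ) (y' : Ω → Fin n ⊕ Fin n → ℝ) (hy' : ∀ ω, y' ω = F x + ε ω)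
    (x' : Ω → Fin c → ℝ)
    (hx' : ∀ ω, x' ω = Wdag.mulVec (fun i => y' ω (Sum.inl i) - y' ω (Sum.inr i))) :
    ∫ ω, ∑ i, (x' ω i - x i) ^ 2 = 2 * σ ^ 2 * (Wᵀ * W)⁻¹.trace :=
  relu_layer_inversion_error_general n c W hW Wdag hWdag F hF ε σ hindep hL2 hmean hvar x y' hy' x'
    hx'
end

section
/- Let W be a real n×c matrix with WᵀW invertible, W† = (WᵀW)⁻¹Wᵀ, F : ℝᶜ → ℝ²ⁿ the ReLU injective layer F(x) = (ReLU(Wx), ReLU(−Wx)), and G : ℝ²ⁿ → ℝᶜ the left inverse G(y) = W†(y₁ − y₂). Then for every x ∈ ℝᶜ and every ε ∈ ℝ²ⁿ, writing y' = F(x) + ε, the re-projection error satisfies ‖F(G(y')) − y'‖ ≤ 3‖ε‖. -/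
open Matrix

/-- The Euclidean norm of a finitely-indexed real vector. -/
noncomputable def euclNorm {ι : Type*} [Fintype ι] (v : ι → ℝ) : ℝ :=
  Real.sqrt (∑ i, v i ^ 2)

lemma euclNorm_nonneg {ι : Type*} [Fintype ι] (v : ι → ℝ) : 0 ≤ euclNorm v :=
  Real.sqrt_nonneg _

lemma euclNorm_sq {ι : Type*} [Fintype ι] (v : ι → ℝ) :
    euclNorm v ^ 2 = ∑ i, v i ^ 2 :=
  Real.sq_sqrt (Finset.sum_nonneg fun i _ => sq_nonneg _)

/-- Cauchy–Schwarz for `euclNorm`. -/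
lemma sum_mul_le_euclNorm_mul {ι : Type*} [Fintype ι] (u v : ι → ℝ) :
    ∑ i, u i * v i ≤ euclNorm u * euclNorm v := by
  have h := Finset.sum_mul_sq_le_sq_mul_sq Finset.univ u v
  calc ∑ i, u i * v i ≤ |∑ i, u i * v i| := le_abs_self _
    _ = Real.sqrt ((∑ i, u i * v i) ^ 2) := (Real.sqrt_sq_eq_abs _).symm
    _ ≤ Real.sqrt ((∑ i, u i ^ 2) * ∑ i, v i ^ 2) := Real.sqrt_le_sqrt h
    _ = euclNorm u * euclNorm v :=
      Real.sqrt_mul (Finset.sum_nonneg fun i _ => sq_nonneg _) _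

lemma euclNorm_add_le {ι : Type*} [Fintype ι] (u v : ι → ℝ) :
    euclNorm (u + v) ≤ euclNorm u + euclNorm v := by
  have hcs := sum_mul_le_euclNorm_mul u v
  have hu := euclNorm_sq u
  have hv := euclNorm_sq v
  have hsum : ∑ i, (u i + v i) ^ 2 ≤ (euclNorm u + euclNorm v) ^ 2 := by
    have : ∑ i, (u i + v i) ^ 2
        = (∑ i, u i ^ 2) + 2 * (∑ i, u i * v i) + ∑ i, v i ^ 2 := by
      simp only [Finset.mul_sum, ← Finset.sum_add_distrib]
      exact Finset.sum_congr rfl fun i _ => by ring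
    nlinarith [euclNorm_nonneg u, euclNorm_nonneg v]
  calc euclNorm (u + v) = Real.sqrt (∑ i, (u i + v i) ^ 2) := rfl
    _ ≤ Real.sqrt ((euclNorm u + euclNorm v) ^ 2) := Real.sqrt_le_sqrt hsum
    _ = euclNorm u + euclNorm v := by
        rw [Real.sqrt_sq (add_nonneg (euclNorm_nonneg u) (euclNorm_nonneg v))]

lemma euclNorm_neg {ι : Type*} [Fintype ι] (v : ι → ℝ) : euclNorm (-v) = euclNorm v := by
  simp [euclNorm]

lemma euclNorm_sub_le {ι : Type*} [Fintype ι] (u v : ι → ℝ) :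
    euclNorm (u - v) ≤ euclNorm u + euclNorm v := by
  have := euclNorm_add_le u (-v)
  simpa [sub_eq_add_neg, euclNorm_neg] using this

/-- Norm bound for an orthogonal projection matrix. -/
lemma proj_mulVec_euclNorm_le {m : Type*} [Fintype m] [DecidableEq m]
    (P : Matrix m m ℝ) (hPT : Pᵀ = P) (hPP : P * P = P) (d : m → ℝ) :
    euclNorm (P.mulVec d) ≤ euclNorm d := by
  set q : m → ℝ := P.mulVec d with hqdef
  have hq : P.mulVec q = q := by
    rw [hqdef, Matrix.mulVec_mulVec, hPP]
  have key : ∑ i, q i * q i = ∑ i, q i * d i := by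
    have h1 : q ⬝ᵥ (P.mulVec d) = (q ᵥ* P) ⬝ᵥ d := Matrix.dotProduct_mulVec q P d
    have h2 : q ᵥ* P = q := by
      have := Matrix.mulVec_transpose P q
      rw [hPT] at this
      rw [← this, hq]
    have : q ⬝ᵥ q = q ⬝ᵥ d := by rw [← hqdef] at h1; rw [h1, h2]
    simpa [dotProduct] using this
  have hcs : ∑ i, q i * d i ≤ euclNorm q * euclNorm d := sum_mul_le_euclNorm_mul q d
  have hqq : euclNorm q ^ 2 = ∑ i, q i * q i := by
    rw [euclNorm_sq]; exact Finset.sum_congr rfl fun i _ => pow_two (q i)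
  have hineq : euclNorm q ^ 2 ≤ euclNorm q * euclNorm d := by
    rw [hqq, key]; exact hcs
  rcases eq_or_lt_of_le (euclNorm_nonneg q) with h0 | h0
  · rw [← h0]; exact euclNorm_nonneg d
  · nlinarith
  
lemma relu_sub (a : ℝ) : max a 0 - max (-a) 0 = a := by
  rcases le_total a 0 with h | h
  · rw [max_eq_right h, max_eq_left (neg_nonneg.2 h)]; ring
  · rw [max_eq_left h, max_eq_right (neg_nonpos.2 h)]; ring

lemma max_sub_sq_le (s t : ℝ) : (max s 0 - max t 0) ^ 2 ≤ (s - t) ^ 2 := by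
  have h := abs_max_sub_max_le_abs s t 0
  calc (max s 0 - max t 0) ^ 2 = |max s 0 - max t 0| ^ 2 := (sq_abs _).symm
    _ ≤ |s - t| ^ 2 := by gcongr
    _ = (s - t) ^ 2 := sq_abs _

/-- ReLU layer re-projection stability. With `F(x) = (ReLU(Wx), ReLU(-Wx))`,
left inverse `G(y) = W†(y₁ - y₂)`, and `y' = F(x) + ε`, we have
`‖F(G(y')) - y'‖ ≤ 3 ‖ε‖`. -/
theorem relu_layer_reprojection (n c : ℕ) (W : Matrix (Fin n) (Fin c) ℝ)
    (hW : IsUnit (Wᵀ * W).det)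
    (Wdag : Matrix (Fin c) (Fin n) ℝ) (hWdag : Wdag = (Wᵀ * W)⁻¹ * Wᵀ)
    (F : (Fin c → ℝ) → (Fin n ⊕ Fin n → ℝ))
    (hF : ∀ x, F x =
      Sum.elim (fun i => max (W.mulVec x i) 0) (fun i => max (-(W.mulVec x i)) 0))
    (G : (Fin n ⊕ Fin n → ℝ) → (Fin c → ℝ))
    (hG : ∀ y, G y = Wdag.mulVec (fun i => y (Sum.inl i) - y (Sum.inr i)))
    (x : Fin c → ℝ) (ε : Fin n ⊕ Fin n → ℝ)
    (y' : Fin n ⊕ Fin n → ℝ) (hy' : y' = F x + ε) :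
    euclNorm (F (G y') - y') ≤ 3 * euclNorm ε := by
  set u : Fin n → ℝ := W.mulVec x with hu
  set d : Fin n → ℝ := fun i => ε (Sum.inl i) - ε (Sum.inr i) with hd
  set P : Matrix (Fin n) (Fin n) ℝ := W * Wdag with hP
  -- basic matrix facts
  have hWdagW : Wdag * W = 1 := by
    rw [hWdag, Matrix.mul_assoc]
    exact Matrix.nonsing_inv_mul _ hW
  have hPT : Pᵀ = P := by
    rw [hP, hWdag]
    simp [Matrix.transpose_mul, Matrix.transpose_nonsing_inv, Matrix.mul_assoc]
  have hPP : P * P = P := by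
    rw [hP]
    calc W * Wdag * (W * Wdag) = W * (Wdag * W) * Wdag := by
          simp only [Matrix.mul_assoc]
      _ = W * Wdag := by rw [hWdagW, Matrix.mul_one]
  set δ : Fin n → ℝ := P.mulVec d with hδ
  -- compute G y'
  have hGy : G y' = x + Wdag.mulVec d := by
    rw [hG]
    have hvec : (fun i => y' (Sum.inl i) - y' (Sum.inr i)) = u + d := by
      funext i
      have h1 : y' (Sum.inl i) = max (u i) 0 + ε (Sum.inl i) := by
        rw [hy', Pi.add_apply, hF]; rfl
      have h2 : y' (Sum.inr i) = max (-(u i)) 0 + ε (Sum.inr i) := by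
        rw [hy', Pi.add_apply, hF]; rfl
      have := relu_sub (u i)
      simp only [Pi.add_apply, h1, h2, hd]
      linarith
    rw [hvec, Matrix.mulVec_add, hu, Matrix.mulVec_mulVec, hWdagW, Matrix.one_mulVec]
  have hWG : W.mulVec (G y') = u + δ := by
    rw [hGy, Matrix.mulVec_add, hδ, hP, ← Matrix.mulVec_mulVec, hu]
  -- the residual vector
  set a : Fin n ⊕ Fin n → ℝ :=
    Sum.elim (fun i => max (u i + δ i) 0 - max (u i) 0)
      (fun i => max (-(u i + δ i)) 0 - max (-(u i)) 0) with ha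
  have hFG : F (G y') = Sum.elim (fun i => max (u i + δ i) 0)
      (fun i => max (-(u i + δ i)) 0) := by
    rw [hF, hWG]; rfl
  have hy1 : ∀ i, y' (Sum.inl i) = max (u i) 0 + ε (Sum.inl i) := fun i => by
    rw [hy', Pi.add_apply, hF]; rfl
  have hy2 : ∀ i, y' (Sum.inr i) = max (-(u i)) 0 + ε (Sum.inr i) := fun i => by
    rw [hy', Pi.add_apply, hF]; rfl
  have hdiff : F (G y') - y' = a - ε := by
    funext j
    cases j with
    | inl i =>
        simp only [Pi.sub_apply, hFG, hy1, ha, Sum.elim_inl]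
        ring
    | inr i =>
        simp only [Pi.sub_apply, hFG, hy2, ha, Sum.elim_inr]
        ring
  -- norm bounds
  have sqrt2_nonneg : (0:ℝ) ≤ Real.sqrt 2 := Real.sqrt_nonneg 2
  have h_a : euclNorm a ≤ Real.sqrt 2 * euclNorm δ := by
    have hsum : ∑ j, a j ^ 2 ≤ 2 * ∑ i, δ i ^ 2 := by
      rw [Fintype.sum_sum_type]
      have h1 : ∑ i, a (Sum.inl i) ^ 2 ≤ ∑ i, δ i ^ 2 := by
        apply Finset.sum_le_sum
        intro i _
        have h := max_sub_sq_le (u i + δ i) (u i)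
        have heq : (u i + δ i - u i) ^ 2 = δ i ^ 2 := by ring
        rw [heq] at h
        exact h
      have h2 : ∑ i, a (Sum.inr i) ^ 2 ≤ ∑ i, δ i ^ 2 := by
        apply Finset.sum_le_sum
        intro i _
        have h := max_sub_sq_le (-(u i + δ i)) (-(u i))
        have heq : (-(u i + δ i) - -(u i)) ^ 2 = δ i ^ 2 := by ring
        rw [heq] at h
        exact h
      linarith
    calc euclNorm a = Real.sqrt (∑ j, a j ^ 2) := rfl
      _ ≤ Real.sqrt (2 * ∑ i, δ i ^ 2) := Real.sqrt_le_sqrt hsum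
      _ = Real.sqrt 2 * euclNorm δ := Real.sqrt_mul (by norm_num) _
  have h_δ : euclNorm δ ≤ euclNorm d := proj_mulVec_euclNorm_le P hPT hPP d
  have h_d : euclNorm d ≤ Real.sqrt 2 * euclNorm ε := by
    have hsum : ∑ i, d i ^ 2 ≤ 2 * ∑ j, ε j ^ 2 := by
      rw [Fintype.sum_sum_type, mul_add, Finset.mul_sum, Finset.mul_sum,
        ← Finset.sum_add_distrib]
      apply Finset.sum_le_sum
      intro i _
      simp only [hd]
      nlinarith [sq_nonneg (ε (Sum.inl i) + ε (Sum.inr i))]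
    calc euclNorm d = Real.sqrt (∑ i, d i ^ 2) := rfl
      _ ≤ Real.sqrt (2 * ∑ j, ε j ^ 2) := Real.sqrt_le_sqrt hsum
      _ = Real.sqrt 2 * euclNorm ε := Real.sqrt_mul (by norm_num) _
  have hs2 : Real.sqrt 2 * Real.sqrt 2 = 2 := Real.mul_self_sqrt (by norm_num)
  have h_a' : euclNorm a ≤ 2 * euclNorm ε := by
    calc euclNorm a ≤ Real.sqrt 2 * euclNorm δ := h_a
      _ ≤ Real.sqrt 2 * (Real.sqrt 2 * euclNorm ε) := by
          apply mul_le_mul_of_nonneg_left _ sqrt2_nonneg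
          exact le_trans h_δ h_d
      _ = 2 * euclNorm ε := by rw [← mul_assoc, hs2]
  calc euclNorm (F (G y') - y') = euclNorm (a - ε) := by rw [hdiff]
    _ ≤ euclNorm a + euclNorm ε := euclNorm_sub_le a ε
    _ ≤ 2 * euclNorm ε + euclNorm ε := by linarith
    _ = 3 * euclNorm ε := by ring
end

section
/- Let B be a real D×D matrix and A a real D×d matrix (d ≤ D) with full column rank, and let μ₁ ≥ μ₂ ≥ … ≥ μ_D denote the eigenvalues of BᵀB in nonincreasing order. Then det((BA)ᵀ(BA)) ≤ det(AᵀA) · Π_{i=1}^{d} μᵢ; that is, det of the Gram matrix of the composition is bounded by det(AᵀA) times the product of the d largest squared singular values of B. -/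
open Matrix

variable {d D : ℕ}

private lemma image_card {p : Fin d → Fin D} (hp : Function.Injective p) :
    (Finset.univ.image p).card = d := by
  rw [Finset.card_image_of_injective _ hp, Finset.card_univ, Fintype.card_fin]

private noncomputable def permOf (p : Fin d → Fin D) (hp : Function.Injective p) :
    Equiv.Perm (Fin d) :=
  Equiv.ofBijective (fun k => ((Finset.univ.image p).orderIsoOfFin (image_card hp)).symm
      ⟨p k, Finset.mem_image_of_mem p (Finset.mem_univ k)⟩)
    (Finite.injective_iff_bijective.mp (fun a b hab => hp (by
      have := congrArg (fun x =>
        ((((Finset.univ.image p).orderIsoOfFin (image_card hp)) x : Fin D))) hab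
      simpa using this)))

private lemma permOf_key (p : Fin d → Fin D) (hp : Function.Injective p) (k : Fin d) :
    (Finset.univ.image p).orderEmbOfFin (image_card hp) (permOf p hp k) = p k := by
  rw [← Finset.coe_orderIsoOfFin_apply]
  simp [permOf, Equiv.ofBijective_apply]

private lemma det_mul_expand (L : Matrix (Fin d) (Fin D) ℝ) (N : Matrix (Fin D) (Fin d) ℝ) :
    det (L * N) = ∑ p : Fin d → Fin D, (∏ i, N (p i) i) * det (L.submatrix id p) := by
  calc det (L * N)
      = ∑ p : Fin d → Fin D, ∑ σ : Equiv.Perm (Fin d),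
          Equiv.Perm.sign σ * ∏ i, L (σ i) (p i) * N (p i) i := by
        simp only [det_apply', mul_apply, Finset.prod_univ_sum, Finset.mul_sum,
          Fintype.piFinset_univ]
        rw [Finset.sum_comm]
    _ = ∑ p : Fin d → Fin D, (∏ i, N (p i) i) * det (L.submatrix id p) := by
        refine Finset.sum_congr rfl fun p _ => ?_
        rw [det_apply', Finset.mul_sum]
        refine Finset.sum_congr rfl fun σ _ => ?_
        simp only [submatrix_apply, id_eq]
        rw [Finset.prod_mul_distrib]
        ring

private lemma cauchy_binet (L : Matrix (Fin d) (Fin D) ℝ) (N : Matrix (Fin D) (Fin d) ℝ) :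
    det (L * N) = ∑ s ∈ (Finset.powersetCard d (Finset.univ : Finset (Fin D))).attach,
      det (L.submatrix id (s.1.orderEmbOfFin (Finset.mem_powersetCard_univ.mp s.2)))
        * det (N.submatrix (s.1.orderEmbOfFin (Finset.mem_powersetCard_univ.mp s.2)) id) := by
  classical
  rw [det_mul_expand]
  have h1 : (∑ p : Fin d → Fin D, (∏ i, N (p i) i) * det (L.submatrix id p))
      = ∑ p ∈ Finset.univ.filter (fun p : Fin d → Fin D => Function.Injective p),
          (∏ i, N (p i) i) * det (L.submatrix id p) := by
    symm
    apply Finset.sum_subset (Finset.filter_subset _ _)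
    intro p _ hp
    simp only [Finset.mem_filter, Finset.mem_univ, true_and] at hp
    rw [Function.Injective] at hp
    push_neg at hp
    obtain ⟨i, j, hij, hne⟩ := hp
    rw [Matrix.det_zero_of_column_eq hne (fun k => by simp [hij]), mul_zero]
  rw [h1]
  have h2 : ∀ s : {x // x ∈ Finset.powersetCard d (Finset.univ : Finset (Fin D))},
      det (L.submatrix id (s.1.orderEmbOfFin (Finset.mem_powersetCard_univ.mp s.2)))
        * det (N.submatrix (s.1.orderEmbOfFin (Finset.mem_powersetCard_univ.mp s.2)) id)
      = ∑ σ : Equiv.Perm (Fin d),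
          (∏ i, N (s.1.orderEmbOfFin (Finset.mem_powersetCard_univ.mp s.2) (σ i)) i)
            * det (L.submatrix id
                (fun k => s.1.orderEmbOfFin (Finset.mem_powersetCard_univ.mp s.2) (σ k))) := by
    intro s
    set e := s.1.orderEmbOfFin (Finset.mem_powersetCard_univ.mp s.2) with he
    have hperm : ∀ σ : Equiv.Perm (Fin d),
        det (L.submatrix id (fun k => e (σ k)))
          = Equiv.Perm.sign σ * det (L.submatrix id e) := by
      intro σ
      have : (L.submatrix id fun k => e (σ k)) = (L.submatrix id e).submatrix id σ := by
        ext i j; simp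
      rw [this, det_permute']
    simp_rw [hperm]
    rw [det_apply' (N.submatrix _ id), Finset.mul_sum]
    refine Finset.sum_congr rfl fun σ _ => ?_
    simp only [submatrix_apply, id_eq]
    ring
  simp_rw [h2]
  rw [← Finset.sum_product']
  refine Finset.sum_bij'
    (i := fun (p : Fin d → Fin D) hp =>
      (⟨Finset.univ.image p, Finset.mem_powersetCard_univ.mpr
          (image_card ((Finset.mem_filter.mp hp).2))⟩,
        permOf p ((Finset.mem_filter.mp hp).2)))
    (j := fun (a : {x // x ∈ Finset.powersetCard d (Finset.univ : Finset (Fin D))}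
        × Equiv.Perm (Fin d)) _ =>
      (fun k => a.1.1.orderEmbOfFin (Finset.mem_powersetCard_univ.mp a.1.2) (a.2 k)))
    (fun p hp => Finset.mem_product.mpr ⟨Finset.mem_attach _ _, Finset.mem_univ _⟩)
    (fun a ha => by
      simp only [Finset.mem_filter, Finset.mem_univ, true_and]
      exact fun x y hxy => a.2.injective ((a.1.1.orderEmbOfFin _).injective hxy))
    ?_ ?_ ?_
  · -- left inverse : j (i p hp) _ = p
    intro p hp
    funext k
    exact permOf_key p ((Finset.mem_filter.mp hp).2) k
  · -- right inverse : i (j a ha) _ = a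
    intro a ha
    obtain ⟨s, σ⟩ := a
    set e := s.1.orderEmbOfFin (Finset.mem_powersetCard_univ.mp s.2) with he
    set p : Fin d → Fin D := fun k => e (σ k) with hpdef
    have hpinj : Function.Injective p := fun x y hxy => σ.injective (e.injective hxy)
    have himg : Finset.univ.image p = s.1 := by
      apply Finset.eq_of_subset_of_card_le
      · intro x hx
        simp only [Finset.mem_image] at hx
        obtain ⟨k, _, rfl⟩ := hx
        exact Finset.orderEmbOfFin_mem _ _ _
      · rw [image_card hpinj, Finset.mem_powersetCard_univ.mp s.2]
    have hE : ⇑((Finset.univ.image p).orderEmbOfFin (image_card hpinj)) = ⇑e := by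
      rw [he]
      apply Finset.orderEmbOfFin_unique
      · intro x
        rw [← himg]
        exact Finset.orderEmbOfFin_mem _ _ _
      · exact ((Finset.univ.image p).orderEmbOfFin (image_card hpinj)).strictMono
    refine Prod.ext (Subtype.ext himg) ?_
    · simp only
      refine Equiv.ext fun k => e.injective ?_
      calc e ((permOf p hpinj) k)
          = ((Finset.univ.image p).orderEmbOfFin (image_card hpinj)) ((permOf p hpinj) k) :=
            (congrFun hE _).symm
        _ = p k := permOf_key p hpinj k
  · -- values agree
    intro p hp
    have hpi := (Finset.mem_filter.mp hp).2
    simp only [permOf_key p hpi]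

private lemma strictMono_le_val {f : Fin d → Fin D} (hf : StrictMono f) (k : Fin d) :
    (k : ℕ) ≤ (f k : ℕ) := by
  obtain ⟨n, hn⟩ := k
  induction n with
  | zero => simp
  | succ m ih =>
    have hm : m < d := Nat.lt_of_succ_lt hn
    have h1 := ih hm
    have hlt : f ⟨m, hm⟩ < f ⟨m + 1, hn⟩ := hf (by simp [Fin.lt_def])
    rw [Fin.lt_def] at hlt
    simp only [Fin.val_mk] at h1 hlt ⊢
    omega

/-- For a real `D × D` matrix `B` and a full-column-rank `D × d` matrix `A`,
with `μ₁ ≥ … ≥ μ_D` the eigenvalues of `BᵀB` in nonincreasing order (encoded by an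
orthogonal diagonalization with nonincreasing `μ`),
`det((BA)ᵀ(BA)) ≤ det(AᵀA) · Π_{i=1}^{d} μᵢ`. -/
theorem gram_det_composition_bound (D d : ℕ) (hd : d ≤ D)
    (B : Matrix (Fin D) (Fin D) ℝ) (A : Matrix (Fin D) (Fin d) ℝ)
    (hA : IsUnit (Aᵀ * A).det)
    (mu : Fin D → ℝ) (hmono : ∀ i j : Fin D, i ≤ j → mu j ≤ mu i)
    (hdiag : ∃ U : Matrix (Fin D) (Fin D) ℝ, Uᵀ * U = 1 ∧
      Bᵀ * B = U * Matrix.diagonal mu * Uᵀ) :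
    ((B * A)ᵀ * (B * A)).det ≤ (Aᵀ * A).det * ∏ i : Fin d, mu (Fin.castLE hd i) := by
  classical
  obtain ⟨U, hU, hBB⟩ := hdiag
  have hUU : U * Uᵀ = 1 := mul_eq_one_comm.mp hU
  -- μ is nonnegative
  have hdiagEq : Matrix.diagonal mu = (B * U)ᵀ * (B * U) := by
    have h1 : Uᵀ * (Bᵀ * B) * U = Matrix.diagonal mu := by
      rw [hBB]
      calc Uᵀ * (U * Matrix.diagonal mu * Uᵀ) * U
          = (Uᵀ * U) * Matrix.diagonal mu * (Uᵀ * U) := by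
            simp only [Matrix.mul_assoc]
        _ = Matrix.diagonal mu := by rw [hU]; simp
    rw [← h1, Matrix.transpose_mul]
    simp only [Matrix.mul_assoc]
  have hmu0 : ∀ i, 0 ≤ mu i := by
    intro i
    have h2 := congrArg (fun M => M i i) hdiagEq
    simp only [Matrix.diagonal_apply_eq, Matrix.mul_apply, Matrix.transpose_apply] at h2
    rw [h2]
    exact Finset.sum_nonneg fun k _ => mul_self_nonneg _
  set C : Matrix (Fin D) (Fin d) ℝ := Uᵀ * A with hC
  have hCC : Cᵀ * C = Aᵀ * A := by
    rw [hC, Matrix.transpose_mul, Matrix.transpose_transpose]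
    calc Aᵀ * U * (Uᵀ * A) = Aᵀ * (U * Uᵀ) * A := by simp only [Matrix.mul_assoc]
      _ = Aᵀ * A := by rw [hUU]; simp [Matrix.mul_assoc]
  set S : Matrix (Fin D) (Fin D) ℝ := Matrix.diagonal (fun i => Real.sqrt (mu i)) with hS
  have hSS : S * S = Matrix.diagonal mu := by
    rw [hS, Matrix.diagonal_mul_diagonal]
    exact congrArg Matrix.diagonal (funext fun i => Real.mul_self_sqrt (hmu0 i))
  set X : Matrix (Fin D) (Fin d) ℝ := S * C with hX
  have hXX : Xᵀ * X = (B * A)ᵀ * (B * A) := by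
    rw [hX, Matrix.transpose_mul]
    have hSt : Sᵀ = S := by rw [hS, Matrix.diagonal_transpose]
    calc Cᵀ * Sᵀ * (S * C) = Cᵀ * ((Sᵀ * S) * C) := by simp only [Matrix.mul_assoc]
      _ = Cᵀ * (Matrix.diagonal mu * C) := by rw [hSt, hSS]
      _ = (B * A)ᵀ * (B * A) := by
          rw [hC, Matrix.transpose_mul, Matrix.transpose_transpose]
          rw [show (B * A)ᵀ * (B * A) = Aᵀ * ((Bᵀ * B) * A) by
            rw [Matrix.transpose_mul]; simp only [Matrix.mul_assoc]]
          rw [hBB]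
          simp only [Matrix.mul_assoc]
  rw [← hXX]
  rw [cauchy_binet Xᵀ X]
  -- each term
  have hterm : ∀ s ∈ (Finset.powersetCard d (Finset.univ : Finset (Fin D))).attach,
      det (Xᵀ.submatrix id (s.1.orderEmbOfFin (Finset.mem_powersetCard_univ.mp s.2)))
        * det (X.submatrix (s.1.orderEmbOfFin (Finset.mem_powersetCard_univ.mp s.2)) id)
      = (∏ k : Fin d, mu (s.1.orderEmbOfFin (Finset.mem_powersetCard_univ.mp s.2) k))
          * det (C.submatrix (s.1.orderEmbOfFin (Finset.mem_powersetCard_univ.mp s.2)) id) ^ 2 := by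
    intro s _
    set e := s.1.orderEmbOfFin (Finset.mem_powersetCard_univ.mp s.2) with he
    have h3 : Xᵀ.submatrix id ⇑e = (X.submatrix ⇑e id)ᵀ := by
      rw [← Matrix.transpose_submatrix]
    have h4 : X.submatrix ⇑e id
        = Matrix.diagonal (fun k => Real.sqrt (mu (e k))) * C.submatrix ⇑e id := by
      ext i j
      simp [hX, hS, Matrix.mul_apply, Matrix.diagonal, Finset.sum_ite_eq,
        Matrix.submatrix_apply]
    rw [h3, Matrix.det_transpose, h4, Matrix.det_mul, Matrix.det_diagonal]
    rw [show ∀ a b : ℝ, a * b * (a * b) = (a * a) * b ^ 2 from fun a b => by ring]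
    rw [← Finset.prod_mul_distrib]
    congr 1
    refine Finset.prod_congr rfl fun k _ => Real.mul_self_sqrt (hmu0 _)
  rw [Finset.sum_congr rfl hterm]
  -- bound each product of eigenvalues by the top-d product
  have hbound : ∀ s ∈ (Finset.powersetCard d (Finset.univ : Finset (Fin D))).attach,
      (∏ k : Fin d, mu (s.1.orderEmbOfFin (Finset.mem_powersetCard_univ.mp s.2) k))
          * det (C.submatrix (s.1.orderEmbOfFin (Finset.mem_powersetCard_univ.mp s.2)) id) ^ 2
      ≤ (∏ i : Fin d, mu (Fin.castLE hd i))
          * det (C.submatrix (s.1.orderEmbOfFin (Finset.mem_powersetCard_univ.mp s.2)) id) ^ 2 := by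
    intro s _
    refine mul_le_mul_of_nonneg_right ?_ (sq_nonneg _)
    refine Finset.prod_le_prod (fun k _ => hmu0 _) fun k _ => ?_
    refine hmono _ _ ?_
    rw [Fin.le_def]
    exact strictMono_le_val (s.1.orderEmbOfFin (Finset.mem_powersetCard_univ.mp s.2)).strictMono k
  refine le_trans (Finset.sum_le_sum hbound) ?_
  rw [← Finset.mul_sum]
  rw [mul_comm]
  refine mul_le_mul_of_nonneg_right ?_ (Finset.prod_nonneg fun k _ => hmu0 _)
  -- ∑ det(C_s)^2 = det (Cᵀ C) = det (Aᵀ A)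
  have h5 : (∑ s ∈ (Finset.powersetCard d (Finset.univ : Finset (Fin D))).attach,
      det (C.submatrix (s.1.orderEmbOfFin (Finset.mem_powersetCard_univ.mp s.2)) id) ^ 2)
      = (Aᵀ * A).det := by
    rw [← hCC, cauchy_binet Cᵀ C]
    refine Finset.sum_congr rfl fun s _ => ?_
    rw [← Matrix.transpose_submatrix, Matrix.det_transpose, sq]
  rw [h5]
end

section
/- Let J₃ be an invertible real d×d matrix, J₂ a real D×d matrix (d ≤ D) of full column rank, and J₁ a real D×D matrix all of whose singular values are at least 1 (equivalently, every eigenvalue of J₁ᵀJ₁ is ≥ 1). Then the Gram determinant of the composition J = J₁J₂J₃ satisfies log det(JᵀJ) ≤ log det(J₁ᵀJ₁) + log det(J₂ᵀJ₂) + log det(J₃ᵀJ₃). -/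
/-!
Write `M = J₁ᵀJ₁ = 1 + Q²` and `G = J₂ᵀJ₂`. The matrix determinant lemma gives
`det (J₂ᵀ M J₂) = det G · det (1 + Q T Q)`, where `T = J₂ G⁻¹ J₂ᵀ` is the orthogonal projection
onto the range of `J₂`. Since `T ≤ 1` in the Loewner order, `1 + Q T Q ≤ 1 + Q² = M`, and the
determinant is monotone on positive semidefinite matrices, so `det (J₂ᵀ M J₂) ≤ det M · det G`.
The invertible factor `J₃` contributes exactly `det (J₃ᵀJ₃)`.
-/

open Matrix
open scoped MatrixOrder

namespace Matrix

theorem posDef_of_one_le {n : Type*} [DecidableEq n] {M : Matrix n n ℝ} (hM : 1 ≤ M) :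
    M.PosDef := by
  simpa using PosDef.one.add_posSemidef (le_iff.mp hM)

variable {m n : Type*} [Fintype m] [Fintype n]

theorem det_le_one_of_nonneg_of_le_one [DecidableEq n] {C : Matrix n n ℝ} (hC₀ : 0 ≤ C)
    (hC₁ : C ≤ 1) : C.det ≤ 1 := by
  have hC := hC₀.posSemidef
  have hspec : ∀ x ∈ spectrum ℝ C, x ≤ 1 := by
    rw [← le_algebraMap_iff_spectrum_le hC.1.isSelfAdjoint, map_one]
    exact hC₁
  rw [hC.1.det_eq_prod_eigenvalues]
  exact Finset.prod_le_one (fun i _ ↦ hC.eigenvalues_nonneg i)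
    (fun i _ ↦ hspec _ (hC.1.eigenvalues_mem_spectrum_real i))

/-- Conjugating by `B^{-1/2}` reduces to the case `B = 1`. -/
theorem det_le_det_of_le [DecidableEq n] {A B : Matrix n n ℝ} (hA : 0 ≤ A) (hAB : A ≤ B)
    (hB : B.PosDef) : A.det ≤ B.det := by
  set S := CFC.sqrt B
  have hSS : S * S = B := CFC.sqrt_mul_sqrt_self B hB.posSemidef.nonneg
  have hS : IsUnit S.det := by
    refine isUnit_iff_ne_zero.mpr fun h ↦ hB.det_pos.ne' ?_
    rw [← hSS, det_mul, h, zero_mul]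
  have hSinv : 0 ≤ S⁻¹ := (CFC.sqrt_nonneg B).posSemidef.inv.nonneg
  set C := S⁻¹ * A * S⁻¹
  have hC₁ : C ≤ 1 := by
    calc C ≤ S⁻¹ * B * S⁻¹ := conjugate_le_conjugate_of_nonneg hAB hSinv
      _ = 1 := by
        rw [← hSS, Matrix.mul_assoc, Matrix.mul_assoc, mul_nonsing_inv _ hS, Matrix.mul_one,
          nonsing_inv_mul _ hS]
  have hA_eq : A = S * C * S := by
    simp only [C, ← Matrix.mul_assoc, mul_nonsing_inv _ hS, Matrix.one_mul]
    rw [Matrix.mul_assoc, nonsing_inv_mul _ hS, Matrix.mul_one]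
  calc A.det = C.det * B.det := by rw [← hSS]; nth_rw 1 [hA_eq]; simp only [det_mul]; ring
    _ ≤ B.det := mul_le_of_le_one_left hB.det_pos.le
      (det_le_one_of_nonneg_of_le_one (conjugate_nonneg_of_nonneg hA hSinv) hC₁)

theorem mulVec_injective_of_isUnit_det_transpose_mul_self [DecidableEq n] {J : Matrix m n ℝ}
    (hJ : IsUnit (Jᵀ * J).det) : Function.Injective J.mulVec := fun x y hxy ↦
  mulVec_injective_iff_isUnit.mpr ((isUnit_iff_isUnit_det _).mpr hJ) <| by
    simp only [← mulVec_mulVec, hxy]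

theorem PosDef.transpose_mul_mul_same {M : Matrix m m ℝ} (hM : M.PosDef) {J : Matrix m n ℝ}
    (hJ : Function.Injective J.mulVec) : (Jᵀ * M * J).PosDef := by
  simpa only [conjTranspose_eq_transpose_of_trivial] using hM.conjTranspose_mul_mul_same hJ

theorem isStarProjection_mul_inv_transpose_mul_self_mul_transpose [DecidableEq n]
    {J : Matrix m n ℝ} (hJ : IsUnit (Jᵀ * J).det) : IsStarProjection (J * (Jᵀ * J)⁻¹ * Jᵀ) where
  isIdempotentElem := by
    simp only [IsIdempotentElem, Matrix.mul_assoc]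
    rw [← Matrix.mul_assoc Jᵀ J, nonsing_inv_mul_cancel_left _ _ hJ]
  isSelfAdjoint := by
    simp [IsSelfAdjoint, star_eq_conjTranspose, transpose_nonsing_inv, Matrix.mul_assoc]

theorem det_transpose_mul_mul_le [DecidableEq m] [DecidableEq n] {M : Matrix m m ℝ} (hM : 1 ≤ M)
    {J : Matrix m n ℝ} (hJ : IsUnit (Jᵀ * J).det) : (Jᵀ * M * J).det ≤ M.det * (Jᵀ * J).det := by
  set T := J * (Jᵀ * J)⁻¹ * Jᵀ
  have hT := isStarProjection_mul_inv_transpose_mul_self_mul_transpose hJ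
  set Q := CFC.sqrt (M - 1)
  have hQ : 0 ≤ Q := CFC.sqrt_nonneg _
  have hQQ : Q * Q = M - 1 := CFC.sqrt_mul_sqrt_self _ (sub_nonneg.mpr hM)
  have hdet : (Jᵀ * M * J).det = (Jᵀ * J).det * (1 + Q * T * Q).det := by
    have hsplit : Jᵀ * M * J = Jᵀ * J + (Jᵀ * Q) * (Q * J) := by
      rw [Matrix.mul_assoc Jᵀ Q, ← Matrix.mul_assoc Q, hQQ]
      simp only [Matrix.sub_mul, Matrix.mul_sub, Matrix.one_mul, Matrix.mul_assoc]
      abel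
    rw [hsplit, det_add_mul _ _ hJ]
    simp only [T, Matrix.mul_assoc]
  have hle : 1 + Q * T * Q ≤ M := by
    calc 1 + Q * T * Q ≤ 1 + Q * 1 * Q := by
          gcongr; exact conjugate_le_conjugate_of_nonneg hT.le_one hQ
      _ = M := by rw [Matrix.mul_one, hQQ, add_sub_cancel]
  have hQTQ : 0 ≤ 1 + Q * T * Q := add_nonneg zero_le_one (conjugate_nonneg_of_nonneg hT.nonneg hQ)
  rw [hdet, mul_comm]
  exact mul_le_mul_of_nonneg_right (det_le_det_of_le hQTQ hle (posDef_of_one_le hM))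
    (posSemidef_conjTranspose_mul_self J).det_nonneg

end Matrix

theorem logdet_layerwise_bound_general (D d : ℕ)
    (J3 : Matrix (Fin d) (Fin d) ℝ) (hJ3 : IsUnit J3.det)
    (J2 : Matrix (Fin D) (Fin d) ℝ) (hJ2 : IsUnit (J2ᵀ * J2).det)
    (J1 : Matrix (Fin D) (Fin D) ℝ) (hJ1 : (J1ᵀ * J1 - 1).PosSemidef) :
    Real.log (((J1 * J2 * J3)ᵀ * (J1 * J2 * J3)).det) ≤
      Real.log ((J1ᵀ * J1).det) + Real.log ((J2ᵀ * J2).det) + Real.log ((J3ᵀ * J3).det) := by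
  set M := J1ᵀ * J1
  have hM : 1 ≤ M := Matrix.le_iff.mpr hJ1
  have hMpd : M.PosDef := posDef_of_one_le hM
  have hGpd : (J2ᵀ * J2).PosDef :=
    (posSemidef_conjTranspose_mul_self J2).posDef_iff_det_ne_zero.mpr hJ2.ne_zero
  have hX : 0 < (J2ᵀ * M * J2).det :=
    (hMpd.transpose_mul_mul_same (mulVec_injective_of_isUnit_det_transpose_mul_self hJ2)).det_pos
  have hJ3pos : 0 < (J3ᵀ * J3).det := by
    rw [det_mul, det_transpose]
    exact mul_self_pos.mpr hJ3.ne_zero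
  have hcomp :
      ((J1 * J2 * J3)ᵀ * (J1 * J2 * J3)).det = (J2ᵀ * M * J2).det * (J3ᵀ * J3).det := by
    have : (J1 * J2 * J3)ᵀ * (J1 * J2 * J3) = J3ᵀ * (J2ᵀ * M * J2) * J3 := by
      simp only [transpose_mul, M, Matrix.mul_assoc]
    rw [this, det_mul, det_mul, det_mul]
    ring
  rw [hcomp, Real.log_mul hX.ne' hJ3pos.ne', ← Real.log_mul hMpd.det_pos.ne' hGpd.det_pos.ne']
  gcongr
  exact det_transpose_mul_mul_le hM hJ2

/-- Proposition 1 of the Trumpets paper, three layers: for `J₃ : d × d`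
invertible, `J₂ : D × d` of full column rank, and `J₁ : D × D` all of whose singular values
are at least `1` (i.e. `J₁ᵀJ₁ - I ⪰ 0`), the composition `J = J₁J₂J₃` satisfies
`log det(JᵀJ) ≤ log det(J₁ᵀJ₁) + log det(J₂ᵀJ₂) + log det(J₃ᵀJ₃)`. -/
theorem logdet_layerwise_bound (D d : ℕ) (hd : d ≤ D)
    (J3 : Matrix (Fin d) (Fin d) ℝ) (hJ3 : IsUnit J3.det)
    (J2 : Matrix (Fin D) (Fin d) ℝ) (hJ2 : IsUnit (J2ᵀ * J2).det)
    (J1 : Matrix (Fin D) (Fin D) ℝ) (hJ1 : (J1ᵀ * J1 - 1).PosSemidef) :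
    Real.log (((J1 * J2 * J3)ᵀ * (J1 * J2 * J3)).det) ≤
      Real.log ((J1ᵀ * J1).det) + Real.log ((J2ᵀ * J2).det) + Real.log ((J3ᵀ * J3).det) :=
  logdet_layerwise_bound_general D d J3 hJ3 J2 hJ2 J1 hJ1
end
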